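/- Let G be a graph on exactly 6n vertices with a partition (A, B, C, D) of V(G) such that |A| = |B| = n, |C| = |D| = 2n, no vertex of A is adjacent to any vertex of D, and no vertex of B is adjacent to any vertex of C. If F ⊆ E(G) has |F| ≤ n and the quotient graph G/F (obtained by contracting each connected component of the subgraph spanned by F to a single vertex) is a clique, then F is a matching of size exactly n in which every edge has one endpoint in A and the other endpoint in B. -/

import Mathlib

/-!
A vertex `a` not covered by `F` is a singleton component of `G/F`, so it needs a `G`-neighbour in
every other component. For `a ∈ A` no vertex of `D` qualifies, so each of the `2n` vertices of
`D` shares its component with a neighbour of `a` outside `D`; then `F` would cover `2n + 1`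
vertices, while `n` edges cover at most `2n`. Hence `F` covers `A ∪ B` (similarly for `B`, using
`C`), and the handshake count `|support| ≤ 2|F|` is tight: `|F| = n`, every vertex has `F`-degree
at most one, and nothing outside `A ∪ B` is covered. An edge `xy ∈ F` inside `A` would make
`{x, y} ⊆ A` a component with no `G`-edge to the singleton component of any vertex of `D`.
-/

open SimpleGraph

/-- Contraction of a set of edges `F` in `G`: the vertices are the connected components of
the graph spanned by `F`, two components adjacent iff some pair of their vertices is
adjacent in `G`. -/
def contract {V : Type*} (G : SimpleGraph V) (F : Set (Sym2 V)) :
    SimpleGraph (SimpleGraph.fromEdgeSet F).ConnectedComponent where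
  Adj c d := c ≠ d ∧ ∃ u v : V, (SimpleGraph.fromEdgeSet F).connectedComponentMk u = c ∧
      (SimpleGraph.fromEdgeSet F).connectedComponentMk v = d ∧ G.Adj u v
  symm := by
    constructor
    rintro c d ⟨hne, u, v, hu, hv, h⟩
    exact ⟨hne.symm, v, u, hv, hu, h.symm⟩
  loopless := ⟨fun c h => h.1 rfl⟩

/-- `G/F` is a complete graph. -/
def IsCliqueGraph {V : Type*} (G : SimpleGraph V) : Prop :=
  ∀ u v : V, u ≠ v → G.Adj u v

/-- A set of edges is a matching if no two distinct edges share an endpoint. -/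
def IsMatchingSet {V : Type*} (M : Set (Sym2 V)) : Prop :=
  ∀ e ∈ M, ∀ f ∈ M, e ≠ f → ∀ v : V, v ∈ e → v ∉ f

namespace SimpleGraph

variable {V : Type*} {G : SimpleGraph V}

theorem ncard_support_le_two_mul_ncard_edgeSet [Finite V] :
    G.support.ncard ≤ 2 * G.edgeSet.ncard := by
  classical
  have := Fintype.ofFinite V
  rw [← coe_edgeFinset, Set.ncard_coe_finset, ← sum_degrees_support_eq_twice_card_edges,
    Set.ncard_eq_toFinset_card', Finset.card_eq_sum_ones]
  exact Finset.sum_le_sum fun v hv => (G.degree_pos_iff_mem_support v).2 (by simpa using hv)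

theorem degree_le_one_of_two_mul_ncard_edgeSet_le [Fintype V] [DecidableRel G.Adj]
    (h : 2 * G.edgeSet.ncard ≤ G.support.ncard) (v : V) : G.degree v ≤ 1 := by
  by_cases hv : v ∈ G.support
  · have hpos : ∀ w ∈ G.support.toFinset, 1 ≤ G.degree w := fun w hw =>
      (G.degree_pos_iff_mem_support w).2 (by simpa using hw)
    have hsum : ∑ w ∈ G.support.toFinset, 1 = ∑ w ∈ G.support.toFinset, G.degree w := by
      refine le_antisymm (Finset.sum_le_sum hpos) ?_
      rw [sum_degrees_support_eq_twice_card_edges, ← Finset.card_eq_sum_ones,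
        ← Set.ncard_eq_toFinset_card', ← Set.ncard_coe_finset, coe_edgeFinset]
      exact h
    exact ((Finset.sum_eq_sum_iff_of_le hpos).1 hsum v (by simpa using hv)).ge
  · simp [(G.degree_eq_zero_iff_notMem_support v).2 hv]

theorem isMatchingSet_edgeSet_of_two_mul_ncard_edgeSet_le [Finite V]
    (h : 2 * G.edgeSet.ncard ≤ G.support.ncard) : IsMatchingSet G.edgeSet := by
  classical
  have := Fintype.ofFinite V
  intro e he f hf hne v hve hvf
  obtain ⟨x, rfl⟩ := Sym2.mem_iff_exists.1 hve
  obtain ⟨y, rfl⟩ := Sym2.mem_iff_exists.1 hvf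
  have hxy : x ≠ y := by rintro rfl; exact hne rfl
  have : 1 < G.degree v :=
    Finset.one_lt_card.2 ⟨x, by simpa using he, y, by simpa using hf, hxy⟩
  exact (degree_le_one_of_two_mul_ncard_edgeSet_le h v).not_gt this

theorem eq_of_reachable_of_notMem_support {a u : V} (ha : a ∉ G.support) (h : G.Reachable a u) :
    u = a := by
  by_contra hne
  exact ha (mem_support_of_reachable (Ne.symm hne) h)

end SimpleGraph

section Contraction

variable {V : Type*} {G : SimpleGraph V} {F : Set (Sym2 V)}

theorem IsCliqueGraph.exists_adj_of_notMem_support (hclique : IsCliqueGraph (contract G F))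
    {a w : V} (ha : a ∉ (fromEdgeSet F).support) (hw : ¬ (fromEdgeSet F).Reachable a w) :
    ∃ v, (fromEdgeSet F).Reachable w v ∧ G.Adj a v := by
  obtain ⟨-, u, v, hu, hv, huv⟩ := hclique _ _ fun h => hw (ConnectedComponent.exact h)
  obtain rfl := eq_of_reachable_of_notMem_support ha (ConnectedComponent.exact hu).symm
  exact ⟨v, (ConnectedComponent.exact hv).symm, huv⟩

theorem IsCliqueGraph.mem_support_of_forall_not_adj [Finite V]
    (hclique : IsCliqueGraph (contract G F)) {a : V} {Y : Set V} (hY : Y.Nonempty)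
    (haY : a ∉ Y) (hno : ∀ y ∈ Y, ¬ G.Adj a y)
    (hsupp : (fromEdgeSet F).support.ncard ≤ Y.ncard) : a ∈ (fromEdgeSet F).support := by
  by_contra ha
  have hreach : ∀ y ∈ Y, ∃ v ∉ Y, (fromEdgeSet F).Reachable y v := by
    intro y hy
    have hay : ¬ (fromEdgeSet F).Reachable a y := fun h =>
      haY (eq_of_reachable_of_notMem_support ha h ▸ hy)
    obtain ⟨v, hyv, hav⟩ := hclique.exists_adj_of_notMem_support ha hay
    exact ⟨v, fun hv => hno v hv hav, hyv⟩
  obtain ⟨y₀, hy₀⟩ := hY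
  obtain ⟨v₀, hv₀, hy₀v₀⟩ := hreach y₀ hy₀
  have hsub : insert v₀ Y ⊆ (fromEdgeSet F).support := by
    rintro w (rfl | hw)
    · exact mem_support_of_reachable (fun h => hv₀ (h ▸ hy₀)) hy₀v₀.symm
    · obtain ⟨v, hv, hwv⟩ := hreach w hw
      exact mem_support_of_reachable (fun h => hv (by rwa [← h])) hwv
  have := Set.ncard_le_ncard hsub
  rw [Set.ncard_insert_of_notMem hv₀] at this
  omega

theorem IsMatchingSet.eq_or_eq_of_reachable (hF : IsMatchingSet F) {x y u : V}
    (hxy : s(x, y) ∈ F) (h : (fromEdgeSet F).Reachable x u) : u = x ∨ u = y := by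
  suffices ∀ {z u}, (fromEdgeSet F).Walk z u → z ∈ s(x, y) → u ∈ s(x, y) by
    obtain ⟨p⟩ := h
    exact Sym2.mem_iff.1 (this p (Sym2.mem_mk_left x y))
  intro z u p
  induction p with
  | nil => exact id
  | cons hadj _ ih =>
    intro hz
    have heq : _ = s(x, y) := not_not.1 fun hne =>
      hF _ hadj.1 _ hxy hne _ (Sym2.mem_mk_left _ _) hz
    exact ih (heq ▸ Sym2.mem_mk_right _ _)

theorem IsMatchingSet.not_both_mem (hF : IsMatchingSet F)
    (hclique : IsCliqueGraph (contract G F)) {X Y : Set V} (hXY : Disjoint X Y)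
    (hno : ∀ x ∈ X, ∀ y ∈ Y, ¬ G.Adj x y) (hY : Y.Nonempty)
    (hYF : Disjoint Y (fromEdgeSet F).support) {x y : V} (he : s(x, y) ∈ F) :
    ¬ (x ∈ X ∧ y ∈ X) := by
  rintro ⟨hx, hy⟩
  obtain ⟨d, hd⟩ := hY
  have hdF := hYF.notMem_of_mem_left hd
  have hdx : ¬ (fromEdgeSet F).Reachable d x := fun h =>
    hXY.notMem_of_mem_left hx (eq_of_reachable_of_notMem_support hdF h ▸ hd)
  obtain ⟨v, hxv, hdv⟩ := hclique.exists_adj_of_notMem_support hdF hdx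
  rcases hF.eq_or_eq_of_reachable he hxv with rfl | rfl
  exacts [hno v hx d hd hdv.symm, hno v hy d hd hdv.symm]

end Contraction

theorem stmt_2_general {V : Type*} [Fintype V] (n : ℕ) (G : SimpleGraph V)
    (A B C D : Set V)
    (hAB : Disjoint A B) (hAC : Disjoint A C) (hAD : Disjoint A D)
    (hBC : Disjoint B C) (hBD : Disjoint B D)
    (hA : A.ncard = n) (hB : B.ncard = n) (hC : C.ncard = 2 * n) (hD : D.ncard = 2 * n)
    (hADedge : ∀ a ∈ A, ∀ d ∈ D, ¬ G.Adj a d)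
    (hBCedge : ∀ b ∈ B, ∀ c ∈ C, ¬ G.Adj b c)
    (F : Set (Sym2 V)) (hFE : F ⊆ G.edgeSet) (hFcard : F.ncard ≤ n)
    (hclique : IsCliqueGraph (contract G F)) :
    F.ncard = n ∧ IsMatchingSet F ∧
      ∀ e ∈ F, ∃ a ∈ A, ∃ b ∈ B, e = s(a, b) := by
  classical
  have hEF : (fromEdgeSet F).edgeSet = F := by
    rw [edgeSet_fromEdgeSet, sdiff_eq_left]
    exact Set.disjoint_left.2 fun e he => G.not_isDiag_of_mem_edgeSet (hFE he)
  have hsupp : (fromEdgeSet F).support.ncard ≤ 2 * F.ncard := by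
    simpa only [hEF] using ncard_support_le_two_mul_ncard_edgeSet (G := fromEdgeSet F)
  have hnonempty {X Y : Set V} (hX : X.ncard = n) (hY : Y.ncard = 2 * n) (hXne : X.Nonempty) :
      Y.Nonempty := Set.nonempty_of_ncard_ne_zero (by have := hXne.ncard_pos; omega)
  have hABsupp : A ∪ B ⊆ (fromEdgeSet F).support := by
    rintro v (hv | hv)
    · exact hclique.mem_support_of_forall_not_adj (hnonempty hA hD ⟨v, hv⟩)
        (hAD.notMem_of_mem_left hv) (hADedge v hv) (by omega)
    · exact hclique.mem_support_of_forall_not_adj (hnonempty hB hC ⟨v, hv⟩)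
        (hBC.notMem_of_mem_left hv) (hBCedge v hv) (by omega)
  have hABcard : (A ∪ B).ncard = 2 * n := by rw [Set.ncard_union_eq hAB, hA, hB]; ring
  have hsuppAB : (fromEdgeSet F).support = A ∪ B :=
    (Set.eq_of_subset_of_ncard_le hABsupp (by omega)).symm
  have hsuppcard : (fromEdgeSet F).support.ncard = 2 * n := hsuppAB ▸ hABcard
  have hM : IsMatchingSet F :=
    hEF ▸ isMatchingSet_edgeSet_of_two_mul_ncard_edgeSet_le (by rw [hEF]; omega)
  refine ⟨by omega, hM, fun e he => ?_⟩
  induction e using Sym2.ind with | _ x y => ?_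
  have hxy : (fromEdgeSet F).Adj x y := (hEF ▸ he :)
  have hx : x ∈ A ∪ B := hsuppAB ▸ hxy.mem_support_left
  have hy : y ∈ A ∪ B := hsuppAB ▸ hxy.mem_support_right
  rcases hx with hxA | hxB <;> rcases hy with hyA | hyB
  · refine absurd ⟨hxA, hyA⟩
      (hM.not_both_mem hclique hAD hADedge (hnonempty hA hD ⟨x, hxA⟩) ?_ he)
    exact hsuppAB ▸ Set.disjoint_union_right.2 ⟨hAD.symm, hBD.symm⟩
  · exact ⟨x, hxA, y, hyB, rfl⟩
  · exact ⟨y, hyA, x, hxB, Sym2.eq_swap⟩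
  · refine absurd ⟨hxB, hyB⟩
      (hM.not_both_mem hclique hBC hBCedge (hnonempty hB hC ⟨x, hxB⟩) ?_ he)
    exact hsuppAB ▸ Set.disjoint_union_right.2 ⟨hAC.symm, hBC.symm⟩

theorem stmt_2 {V : Type*} [Fintype V] (n : ℕ) (G : SimpleGraph V)
    (A B C D : Set V)
    (hunion : A ∪ B ∪ C ∪ D = Set.univ)
    (hAB : Disjoint A B) (hAC : Disjoint A C) (hAD : Disjoint A D)
    (hBC : Disjoint B C) (hBD : Disjoint B D) (hCD : Disjoint C D)
    (hV : Fintype.card V = 6 * n)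
    (hA : A.ncard = n) (hB : B.ncard = n) (hC : C.ncard = 2 * n) (hD : D.ncard = 2 * n)
    (hADedge : ∀ a ∈ A, ∀ d ∈ D, ¬ G.Adj a d)
    (hBCedge : ∀ b ∈ B, ∀ c ∈ C, ¬ G.Adj b c)
    (F : Set (Sym2 V)) (hFE : F ⊆ G.edgeSet) (hFcard : F.ncard ≤ n)
    (hclique : IsCliqueGraph (contract G F)) :
    F.ncard = n ∧ IsMatchingSet F ∧
      ∀ e ∈ F, ∃ a ∈ A, ∃ b ∈ B, e = s(a, b) :=
  stmt_2_general n G A B C D hAB hAC hAD hBC hBD hA hB hC hD hADedge hBCedge F hFE hFcard hclique
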